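/- arXiv:2301.09159 — 2 statements merged into one kernel-verified Lean document; each statement's English description precedes it below -/
import Mathlib

section
/- Consider the regularized equilibrium of a one-shot zero-sum game with KL regularization: if a joint policy (π0*, π1*) is a saddle point of the objective J_α(π0, π1) = u(π0, π1) − α KL(π0, ρ0) + α KL(π1, ρ1), where u is bilinear in the mixed strategies over finite action sets, ρ0, ρ1 have all probabilities at least ε ∈ (0,1], α > 0, then the exploitability of (π0*, π1*) with respect to the unregularized objective u is at most α |log ε|. -/
open Finset

/-- KL divergence between two pmfs on a finite set. -/
noncomputable def KLdiv {A : Type*} [Fintype A] (p q : A → ℝ) : ℝ :=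
  ∑ a, p a * Real.log (p a / q a)

/-- Bilinear payoff of a matrix game in mixed strategies. -/
noncomputable def matPay {A0 A1 : Type*} [Fintype A0] [Fintype A1]
    (M : A0 → A1 → ℝ) (x : A0 → ℝ) (y : A1 → ℝ) : ℝ :=
  ∑ a, ∑ b, x a * y b * M a b

/-! A saddle point of the regularized game beats every deviation `x` (resp. `y`) up to the
difference of the KL penalties. Those differences are at most `KL(x, ρ0) ≤ -log ε` (resp.
`KL(y, ρ1)`), since KL divergences are nonnegative and a log-ratio `log (π a / ρ a)` is at most
`log (1 / ε)`; adding the two one-sided inequalities bounds the duality gap by `2 α |log ε|`. -/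

open Real

lemma sub_le_mul_log_div {p q : ℝ} (hp : 0 ≤ p) (hq : 0 < q) : p - q ≤ p * log (p / q) := by
  have h := mul_nonneg hq.le (InformationTheory.klFun_nonneg (div_nonneg hp hq.le))
  have hexpand : q * InformationTheory.klFun (p / q) = p * log (p / q) + q - p := by
    rw [InformationTheory.klFun_apply]
    field_simp
  linarith

lemma mul_log_div_le_neg_log {p q ε : ℝ} (hp : p ∈ Set.Icc (0 : ℝ) 1) (hε : 0 < ε)
    (hεq : ε ≤ q) : p * log (p / q) ≤ p * -log ε := by
  obtain ⟨hp0, hp1⟩ := hp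
  rcases hp0.eq_or_lt with rfl | hp_pos
  · simp
  have hq : 0 < q := hε.trans_le hεq
  refine mul_le_mul_of_nonneg_left ?_ hp0
  rw [log_div hp_pos.ne' hq.ne']
  linarith [log_nonpos hp0 hp1, log_le_log hε hεq]

section KLdiv

variable {A : Type*} [Fintype A] {p q : A → ℝ}

lemma KLdiv_nonneg (hp : p ∈ stdSimplex ℝ A) (hq : q ∈ stdSimplex ℝ A)
    (hq_pos : ∀ a, 0 < q a) : 0 ≤ KLdiv p q := by
  have h : ∑ a, (p a - q a) ≤ KLdiv p q :=
    sum_le_sum fun a _ ↦ sub_le_mul_log_div (hp.1 a) (hq_pos a)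
  rwa [sum_sub_distrib, hp.2, hq.2, sub_self] at h

lemma KLdiv_le_neg_log {ε : ℝ} (hp : p ∈ stdSimplex ℝ A) (hε : 0 < ε) (hq : ∀ a, ε ≤ q a) :
    KLdiv p q ≤ -log ε :=
  calc KLdiv p q ≤ ∑ a, p a * -log ε :=
        sum_le_sum fun a _ ↦ mul_log_div_le_neg_log (mem_Icc_of_mem_stdSimplex hp a) hε (hq a)
    _ = -log ε := by rw [← sum_mul, hp.2, one_mul]

end KLdiv

theorem stmt4_general {A0 A1 : Type*} [Fintype A0] [Fintype A1]
    (M : A0 → A1 → ℝ) (ρ0 : A0 → ℝ) (ρ1 : A1 → ℝ) (α ε : ℝ)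
    (hα : 0 < α) (hε0 : 0 < ε)
    (hρ0 : ρ0 ∈ stdSimplex ℝ A0) (hρ1 : ρ1 ∈ stdSimplex ℝ A1)
    (hρ0ε : ∀ a, ε ≤ ρ0 a) (hρ1ε : ∀ b, ε ≤ ρ1 b)
    (π0s : A0 → ℝ) (π1s : A1 → ℝ)
    (hπ0s : π0s ∈ stdSimplex ℝ A0) (hπ1s : π1s ∈ stdSimplex ℝ A1)
    (hsaddle : ∀ x ∈ stdSimplex ℝ A0, ∀ y ∈ stdSimplex ℝ A1,
      matPay M x π1s - α * KLdiv x ρ0 + α * KLdiv π1s ρ1 ≤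
        matPay M π0s π1s - α * KLdiv π0s ρ0 + α * KLdiv π1s ρ1 ∧
      matPay M π0s π1s - α * KLdiv π0s ρ0 + α * KLdiv π1s ρ1 ≤
        matPay M π0s y - α * KLdiv π0s ρ0 + α * KLdiv y ρ1) :
    ∀ x ∈ stdSimplex ℝ A0, ∀ y ∈ stdSimplex ℝ A1,
      (matPay M x π1s - matPay M π0s y) / 2 ≤ α * |Real.log ε| := by
  intro x hx y hy
  obtain ⟨hx_dev, hy_dev⟩ := hsaddle x hx y hy
  have hπ0s_nonneg := KLdiv_nonneg hπ0s hρ0 fun a ↦ hε0.trans_le (hρ0ε a)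
  have hπ1s_nonneg := KLdiv_nonneg hπ1s hρ1 fun b ↦ hε0.trans_le (hρ1ε b)
  have hx_le := KLdiv_le_neg_log hx hε0 hρ0ε
  have hy_le := KLdiv_le_neg_log hy hε0 hρ1ε
  have hgap : matPay M x π1s - matPay M π0s y ≤ 2 * (α * -log ε) :=
    calc matPay M x π1s - matPay M π0s y
        ≤ α * (KLdiv x ρ0 - KLdiv π0s ρ0) + α * (KLdiv y ρ1 - KLdiv π1s ρ1) := by linarith
      _ ≤ α * -log ε + α * -log ε := by gcongr <;> linarith
      _ = 2 * (α * -log ε) := by ring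
  have hlog : α * -log ε ≤ α * |log ε| := mul_le_mul_of_nonneg_left (neg_le_abs _) hα.le
  linarith

/-- A saddle point of the KL-regularized objective
`J_α(π0,π1) = u(π0,π1) − α KL(π0,ρ0) + α KL(π1,ρ1)` has exploitability under the
unregularized objective `u` at most `α |log ε|`, when the reference strategies place
probability at least `ε` on every action. -/
theorem stmt4 {A0 A1 : Type*} [Fintype A0] [Fintype A1] [Nonempty A0] [Nonempty A1]
    (M : A0 → A1 → ℝ) (ρ0 : A0 → ℝ) (ρ1 : A1 → ℝ) (α ε : ℝ)
    (hα : 0 < α) (hε0 : 0 < ε) (hε1 : ε ≤ 1)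
    (hρ0 : ρ0 ∈ stdSimplex ℝ A0) (hρ1 : ρ1 ∈ stdSimplex ℝ A1)
    (hρ0ε : ∀ a, ε ≤ ρ0 a) (hρ1ε : ∀ b, ε ≤ ρ1 b)
    (π0s : A0 → ℝ) (π1s : A1 → ℝ)
    (hπ0s : π0s ∈ stdSimplex ℝ A0) (hπ1s : π1s ∈ stdSimplex ℝ A1)
    (hsaddle : ∀ x ∈ stdSimplex ℝ A0, ∀ y ∈ stdSimplex ℝ A1,
      matPay M x π1s - α * KLdiv x ρ0 + α * KLdiv π1s ρ1 ≤
        matPay M π0s π1s - α * KLdiv π0s ρ0 + α * KLdiv π1s ρ1 ∧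
      matPay M π0s π1s - α * KLdiv π0s ρ0 + α * KLdiv π1s ρ1 ≤
        matPay M π0s y - α * KLdiv π0s ρ0 + α * KLdiv y ρ1) :
    ∀ x ∈ stdSimplex ℝ A0, ∀ y ∈ stdSimplex ℝ A1,
      (matPay M x π1s - matPay M π0s y) / 2 ≤ α * |Real.log ε| :=
  stmt4_general M ρ0 ρ1 α ε hα hε0 hρ0 hρ1 hρ0ε hρ1ε π0s π1s hπ0s hπ1s hsaddle
end

section
/- Let q ∈ ℝ^A for a finite set A, α > 0, η > 0, and π ∈ Δ(A) with full support. Then the unique maximizer of δ ↦ ⟨δ, q⟩ + α H(δ) − (1/η) KL(δ, π) over Δ(A) is given in closed form by δ*(a) ∝ (π(a) e^{η q(a)})^{1/(1+αη)}. -/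
open Finset

/-- The magnetic mirror descent update target. -/
noncomputable def mmdPol {A : Type*} [Fintype A] (α η : ℝ) (π q : A → ℝ) : A → ℝ :=
  fun a => (π a * Real.exp (η * q a)) ^ ((1 : ℝ) / (1 + α * η)) /
    ∑ b, (π b * Real.exp (η * q b)) ^ ((1 : ℝ) / (1 + α * η))

/-- The MMD objective: `⟨δ, q⟩ + α H(δ) − (1/η) KL(δ, π)`. -/
noncomputable def mmdObj {A : Type*} [Fintype A] (α η : ℝ) (π q : A → ℝ)
    (δ : A → ℝ) : ℝ :=
  (∑ a, δ a * q a) + α * (-∑ a, δ a * Real.log (δ a)) -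
    (1 / η) * ∑ a, δ a * Real.log (δ a / π a)

/-- The unique maximizer over the simplex of `⟨δ,q⟩ + α H(δ) − (1/η) KL(δ,π)` is
`δ*(a) ∝ (π(a) e^{η q(a)})^{1/(1+αη)}`. -/
theorem stmt19 {A : Type*} [Fintype A] [Nonempty A]
    (q : A → ℝ) (α η : ℝ) (hα : 0 < α) (hη : 0 < η)
    (π : A → ℝ) (hπ : π ∈ stdSimplex ℝ A) (hπpos : ∀ a, 0 < π a) :
    mmdPol α η π q ∈ stdSimplex ℝ A ∧
    (∀ δ ∈ stdSimplex ℝ A, mmdObj α η π q δ ≤ mmdObj α η π q (mmdPol α η π q)) ∧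
    (∀ δ ∈ stdSimplex ℝ A,
      (∀ δ' ∈ stdSimplex ℝ A, mmdObj α η π q δ' ≤ mmdObj α η π q δ) →
      δ = mmdPol α η π q) := by
  set c : ℝ := 1 + α * η with hc_def
  have hc : 0 < c := by positivity
  set f : A → ℝ := fun a => (π a * Real.exp (η * q a)) ^ ((1 : ℝ) / c) with hf_def
  have hfpos : ∀ a, 0 < f a := fun a =>
    Real.rpow_pos_of_pos (mul_pos (hπpos a) (Real.exp_pos _)) _
  set Z : ℝ := ∑ b, f b with hZ_def
  have hZpos : 0 < Z := Finset.sum_pos (fun a _ => hfpos a) Finset.univ_nonempty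
  set p : A → ℝ := mmdPol α η π q with hp_def
  have hpf : ∀ a, p a = f a / Z := fun a => rfl
  have hppos : ∀ a, 0 < p a := fun a => by
    rw [hpf]; exact div_pos (hfpos a) hZpos
  have hpsum : ∑ a, p a = 1 := by
    simp only [hpf]
    rw [← Finset.sum_div, ← hZ_def, div_self hZpos.ne']
  have hpSimplex : p ∈ stdSimplex ℝ A := ⟨fun a => (hppos a).le, hpsum⟩
  -- log f a = (η q a + log π a) / c
  have hlogf : ∀ a, c * Real.log (f a) = η * q a + Real.log (π a) := fun a => by
    rw [hf_def]
    rw [Real.log_rpow (mul_pos (hπpos a) (Real.exp_pos _)),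
      Real.log_mul (hπpos a).ne' (Real.exp_pos _).ne', Real.log_exp]
    field_simp
    ring
  have hlogp : ∀ a, Real.log (p a) = Real.log (f a) - Real.log Z := fun a => by
    rw [hpf, Real.log_div (hfpos a).ne' hZpos.ne']
  -- key identity
  have hobj : ∀ δ : A → ℝ, (∀ a, 0 ≤ δ a) → ∑ a, δ a = 1 →
      η * mmdObj α η π q δ =
        c * Real.log Z + c * ∑ a, δ a * (Real.log (p a) - Real.log (δ a)) := by
    intro δ hδ0 hδ1
    have hterm : ∀ a, η * (δ a * q a) + α * η * (-(δ a * Real.log (δ a)))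
        - δ a * Real.log (δ a / π a)
        = c * (δ a * Real.log Z) + c * (δ a * (Real.log (p a) - Real.log (δ a))) := by
      intro a
      rcases eq_or_lt_of_le (hδ0 a) with h | h
      · simp [← h]
      · rw [Real.log_div h.ne' (hπpos a).ne', hlogp]
        have hl := hlogf a
        rw [hc_def] at hl ⊢
        linear_combination (-(δ a)) * hl
    have e1 : ∑ a, (η * (δ a * q a) + α * η * (-(δ a * Real.log (δ a)))
          - δ a * Real.log (δ a / π a))
        = η * (∑ a, δ a * q a) + α * η * (-∑ a, δ a * Real.log (δ a))
          - ∑ a, δ a * Real.log (δ a / π a) := by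
      rw [Finset.sum_sub_distrib, Finset.sum_add_distrib, ← Finset.mul_sum,
        ← Finset.mul_sum]
      congr 1
      congr 1
      rw [Finset.sum_neg_distrib]
    have expand : η * mmdObj α η π q δ =
        ∑ a, (η * (δ a * q a) + α * η * (-(δ a * Real.log (δ a)))
          - δ a * Real.log (δ a / π a)) := by
      rw [mmdObj, e1]
      field_simp
    rw [expand]
    simp only [hterm]
    rw [Finset.sum_add_distrib, ← Finset.mul_sum, ← Finset.mul_sum, ← Finset.sum_mul, hδ1]
    ring
    -- value at p
  have hobjp : η * mmdObj α η π q p = c * Real.log Z := by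
    rw [hobj p (fun a => (hppos a).le) hpsum]
    have : ∑ a, p a * (Real.log (p a) - Real.log (p a)) = 0 := by simp
    rw [this, mul_zero, add_zero]
  -- Gibbs termwise bound
  have hgibbs : ∀ δ : A → ℝ, (∀ a, 0 ≤ δ a) →
      ∀ a, δ a * (Real.log (p a) - Real.log (δ a)) ≤ p a - δ a := by
    intro δ hδ0 a
    rcases eq_or_lt_of_le (hδ0 a) with h | h
    · simp [← h]; exact (hppos a).le
    · rw [← Real.log_div (hppos a).ne' h.ne']
      have hlog := Real.log_le_sub_one_of_pos (div_pos (hppos a) h)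
      have := mul_le_mul_of_nonneg_left hlog h.le
      calc δ a * Real.log (p a / δ a) ≤ δ a * (p a / δ a - 1) := this
        _ = p a - δ a := by field_simp
  have hmax : ∀ δ ∈ stdSimplex ℝ A, mmdObj α η π q δ ≤ mmdObj α η π q p := by
    intro δ ⟨hδ0, hδ1⟩
    have hsum : ∑ a, δ a * (Real.log (p a) - Real.log (δ a)) ≤ 0 := by
      calc ∑ a, δ a * (Real.log (p a) - Real.log (δ a))
          ≤ ∑ a, (p a - δ a) := Finset.sum_le_sum fun a _ => hgibbs δ hδ0 a
        _ = 0 := by rw [Finset.sum_sub_distrib, hpsum, hδ1, sub_self]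
    have h1 : η * mmdObj α η π q δ ≤ η * mmdObj α η π q p := by
      rw [hobj δ hδ0 hδ1, hobjp]
      nlinarith
    exact le_of_mul_le_mul_left h1 hη
  refine ⟨hpSimplex, hmax, ?_⟩
  intro δ hδs hδmax
  obtain ⟨hδ0, hδ1⟩ := hδs
  have heq : mmdObj α η π q δ = mmdObj α η π q p :=
    le_antisymm (hmax δ ⟨hδ0, hδ1⟩) (hδmax p hpSimplex)
  have hT : ∑ a, δ a * (Real.log (p a) - Real.log (δ a)) = 0 := by
    have := hobj δ hδ0 hδ1
    rw [heq, hobjp] at this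
    have h2 : c * ∑ a, δ a * (Real.log (p a) - Real.log (δ a)) = 0 := by linarith
    exact (mul_eq_zero.mp h2).resolve_left hc.ne'
  have hzero : ∀ a ∈ Finset.univ,
      (p a - δ a) - δ a * (Real.log (p a) - Real.log (δ a)) = 0 := by
    have hsum0 : ∑ a, ((p a - δ a) - δ a * (Real.log (p a) - Real.log (δ a))) = 0 := by
      rw [Finset.sum_sub_distrib, hT, Finset.sum_sub_distrib, hpsum, hδ1]; ring
    exact fun a _ => (Finset.sum_eq_zero_iff_of_nonneg
      (fun a _ => sub_nonneg.mpr (hgibbs δ hδ0 a))).mp hsum0 a (Finset.mem_univ a)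
  funext a
  have ha := hzero a (Finset.mem_univ a)
  rcases eq_or_lt_of_le (hδ0 a) with h | h
  · exfalso
    rw [← h] at ha
    simp at ha
    exact absurd ha.symm (hppos a).ne
  · by_contra hne
    have hdiv : p a / δ a ≠ 1 := by
      intro h1
      exact hne ((div_eq_one_iff_eq h.ne').mp h1).symm
    have hstrict := Real.log_lt_sub_one_of_pos (div_pos (hppos a) h) hdiv
    have h2 : δ a * Real.log (p a / δ a) < δ a * (p a / δ a - 1) :=
      mul_lt_mul_of_pos_left hstrict h
    rw [← Real.log_div (hppos a).ne' h.ne'] at ha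
    have h3 : δ a * (p a / δ a - 1) = p a - δ a := by field_simp
    rw [h3] at h2
    linarith [sub_eq_zero.mp ha]
end
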